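/- For j = 1,2, suppose there exists a (c_j, t) LP-packing {P_{j,0},…,P_{j,t-1}} in an abelian group G_j of order t²c_j² relative to a subgroup U_j of order t·c_j. Define, for ℓ = 0,…,t-1, K_ℓ = P_{1,ℓ}·U₂ ∪ U₁·P_{2,ℓ} ∪ ⋃_{i=0}^{t-1} P_{1,i}·P_{2,i+ℓ} (indices mod t), where A·B denotes {(a,b) : a∈A, b∈B} ⊆ G₁×G₂. Then {K₀,…,K_{t-1}} is a (t·c₁c₂, t) LP-packing in G₁×G₂ relative to U₁×U₂. -/

import Mathlib

open Finset BigOperators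

variable {G : Type*}

/-- Number of ordered pairs `(x,y)` with `x,y ∈ D`, `x ≠ y`, `x * y⁻¹ = g`. -/
noncomputable def diffCount [Group G] (D : Set G) (g : G) : ℕ :=
  Nat.card {p : G × G // p.1 ∈ D ∧ p.2 ∈ D ∧ p.1 ≠ p.2 ∧ p.1 * p.2⁻¹ = g}

/-- `D` is a `(v,k,λ,μ)` partial difference set in `G`. -/
def IsPDS [Group G] (D : Set G) (v k : ℕ) (l m : ℤ) : Prop :=
  Nat.card G = v ∧ Nat.card D = k ∧
    ∀ g : G, g ≠ 1 →
      (g ∈ D → (diffCount D g : ℤ) = l) ∧ (g ∉ D → (diffCount D g : ℤ) = m)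

/-- A regular PDS: a PDS avoiding the identity and closed under inversion. -/
def IsRegularPDS [Group G] (D : Set G) (v k : ℕ) (l m : ℤ) : Prop :=
  IsPDS D v k l m ∧ (1 : G) ∉ D ∧ D⁻¹ = D

/-- A regular `(n,r)` Latin square type PDS. -/
def IsLatinPDS [Group G] (D : Set G) (n r : ℕ) : Prop :=
  IsRegularPDS D (n ^ 2) (r * (n - 1)) ((n : ℤ) + (r : ℤ) ^ 2 - 3 * r) ((r : ℤ) ^ 2 - r)

/-- A regular `(n,r)` negative Latin square type PDS. -/
def IsNegLatinPDS [Group G] (D : Set G) (n r : ℕ) : Prop :=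
  IsRegularPDS D (n ^ 2) (r * (n + 1)) (-(n : ℤ) + (r : ℤ) ^ 2 + 3 * r) ((r : ℤ) ^ 2 + r)

/-- Character sum `χ(D) = ∑_{d ∈ D} χ(d)`. -/
noncomputable def charSum [Group G] (χ : G →* ℂˣ) (D : Set G) : ℂ :=
  ∑ᶠ d ∈ D, (χ d : ℂ)

/-- The multiset of character sums `{χ(P 0), …, χ(P (t-1))}`. -/
noncomputable def charMultiset [Group G] {t : ℕ} (χ : G →* ℂˣ) (P : Fin t → Set G) :
    Multiset ℂ :=
  (Finset.univ.val : Multiset (Fin t)).map fun i => charSum χ (P i)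

/-- `χ` is principal on the subgroup `U`. -/
def IsPrincipalOn [Group G] (χ : G →* ℂˣ) (U : Subgroup G) : Prop :=
  ∀ u ∈ U, χ u = 1

/-- A `(c,t)` LP-packing in `G` relative to `U`. -/
def IsLPPacking [CommGroup G] (c t : ℕ) (P : Fin t → Set G) (U : Subgroup G) : Prop :=
  Nat.card G = t ^ 2 * c ^ 2 ∧ Nat.card U = t * c ∧
    (∀ i, IsLatinPDS (P i) (t * c) c) ∧
    (∀ i j, i ≠ j → Disjoint (P i) (P j)) ∧
    (⋃ i, P i) = Set.univ \ (U : Set G)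

/-- A `(c,t-1)` NLP-packing in `G`. -/
def IsNLPPacking [CommGroup G] (c t : ℕ) (P : Fin (t - 1) → Set G) : Prop :=
  Nat.card G = t ^ 2 * c ^ 2 ∧
    (∀ i, IsNegLatinPDS (P i) (t * c) c) ∧
    IsNegLatinPDS (Set.univ \ ({1} ∪ ⋃ i, P i)) (t * c) (c - 1)

/-- A `(c,t)` LP-partition in `G − V` relative to `H`. -/
def IsLPPartition [CommGroup G] (c t : ℕ) (R : Fin t → Set G) (V H : Subgroup G) : Prop :=
  Nat.card G = t ^ 2 * c ^ 2 ∧ Nat.card V = t * c ^ 2 ∧ H ≤ V ∧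
    (∀ i, Nat.card (R i) = (t - 1) * c ^ 2) ∧
    (∀ i j, i ≠ j → Disjoint (R i) (R j)) ∧
    (⋃ i, R i) = Set.univ \ (V : Set G) ∧
    ∀ χ : G →* ℂˣ, χ ≠ 1 →
      (IsPrincipalOn χ V → charMultiset χ R = Multiset.replicate t (-(c : ℂ) ^ 2)) ∧
      (¬ IsPrincipalOn χ V → IsPrincipalOn χ H →
        charMultiset χ R = Multiset.replicate t 0) ∧
      (¬ IsPrincipalOn χ H →
        charMultiset χ R = ((t : ℂ) - 1) * (c : ℂ) ::ₘ Multiset.replicate (t - 1) (-(c : ℂ)))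

/-!
For `D` with `1 ∉ D = D⁻¹` and `|D| = r (n - 1)` in an abelian group of order `n²`, Fourier
inversion turns the PDS equations into the group-ring identity
`D D⁽⁻¹⁾ = r (n - 1) + λ D + μ (G - 1 - D)`, i.e. `χ(D)² = r (n - r) + (n - 2r) χ(D)` for every
`χ ≠ 1`: `D` is of Latin square type iff all nonprincipal character sums are `-r` or `n - r`.
In an LP-packing these values and `∑ᵢ χ(Pᵢ) = -χ(U)` force `χ(Pᵢ) = -c` for all `i` when `χ` is
principal on `U`, and `χ(Pᵢ) = (t - 1) c` for exactly one `i` (and `-c` otherwise) when it is not.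

A character of `G₁ × G₂` is `χ₁ ⊗ χ₂`, and
`χ(K_ℓ) = χ₁(P₁ ℓ) χ₂(U₂) + χ₁(U₁) χ₂(P₂ ℓ) + ∑ᵢ χ₁(P₁ i) χ₂(P₂ (i + ℓ))`.
Depending on whether `χ₁`, `χ₂` are principal on `U₁`, `U₂`, this is `-t c₁ c₂`, or
`t c₁ χ₂(P₂ j)` for some `j`, or `t c₂ χ₁(P₁ i)` for some `i`; so every `K_ℓ` has the character
sums of a Latin square type PDS. The `K_ℓ` partition `G₁ × G₂ - U₁ × U₂` because every element
outside `U₁` (resp. `U₂`) lies in exactly one `P₁ i` (resp. `P₂ j`).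
-/

theorem isPrincipalOn_one [Group G] (U : Subgroup G) : IsPrincipalOn (1 : G →* ℂˣ) U :=
  fun _ _ => rfl

theorem ne_one_of_not_isPrincipalOn [Group G] {χ : G →* ℂˣ} {U : Subgroup G}
    (h : ¬ IsPrincipalOn χ U) : χ ≠ 1 := by
  rintro rfl
  exact h (isPrincipalOn_one U)

section CharacterSums

open scoped Classical

variable [CommGroup G] [Fintype G]

theorem sum_char_eq_zero {χ : G →* ℂˣ} (hχ : χ ≠ 1) : ∑ g, (χ g : ℂ) = 0 := by
  refine sum_hom_units_eq_zero ((Units.coeHom ℂ).comp χ) fun h => hχ ?_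
  ext g
  simpa using DFunLike.congr_fun h g

theorem charSum_eq_sum_toFinset (χ : G →* ℂˣ) (D : Set G) :
    charSum χ D = ∑ g ∈ D.toFinset, (χ g : ℂ) :=
  finsum_mem_eq_toFinset_sum _ _

theorem charSum_eq_card {χ : G →* ℂˣ} {D : Set G} (h : ∀ g ∈ D, χ g = 1) :
    charSum χ D = Nat.card D := by
  rw [charSum_eq_sum_toFinset, Nat.card_eq_card_toFinset, Finset.cast_card]
  exact Finset.sum_congr rfl fun g hg => by simp [h g (Set.mem_toFinset.mp hg)]

theorem charSum_one (D : Set G) : charSum 1 D = Nat.card D :=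
  charSum_eq_card fun _ _ => rfl

theorem charSum_union (χ : G →* ℂˣ) {A B : Set G} (h : Disjoint A B) :
    charSum χ (A ∪ B) = charSum χ A + charSum χ B :=
  finsum_mem_union h A.toFinite B.toFinite

theorem charSum_iUnion {ι : Type*} [Fintype ι] (χ : G →* ℂˣ) {P : ι → Set G}
    (h : ∀ i j, i ≠ j → Disjoint (P i) (P j)) :
    charSum χ (⋃ i, P i) = ∑ i, charSum χ (P i) := by
  rw [charSum, finsum_mem_iUnion (fun i j => h i j) fun i => (P i).toFinite,
    finsum_eq_sum_of_fintype]
  rfl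

theorem charSum_univ_eq_zero {χ : G →* ℂˣ} (hχ : χ ≠ 1) : charSum χ Set.univ = 0 := by
  rw [charSum, finsum_mem_univ, finsum_eq_sum_of_fintype, sum_char_eq_zero hχ]

theorem charSum_subgroup_of_isPrincipalOn {χ : G →* ℂˣ} {U : Subgroup G}
    (h : IsPrincipalOn χ U) : charSum χ U = Nat.card U :=
  charSum_eq_card h

theorem charSum_subgroup_of_not_isPrincipalOn {χ : G →* ℂˣ} {U : Subgroup G}
    (h : ¬ IsPrincipalOn χ U) : charSum χ U = 0 := by
  rw [charSum, ← finsum_set_coe_eq_finsum_mem, finsum_eq_sum_of_fintype]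
  refine sum_hom_units_eq_zero ((Units.coeHom ℂ).comp (χ.comp U.subtype)) fun h' => h ?_
  intro u hu
  simpa using DFunLike.congr_fun h' ⟨u, hu⟩

theorem charSum_prod {G' : Type*} [CommGroup G'] [Fintype G'] (χ : G × G' →* ℂˣ)
    (A : Set G) (B : Set G') :
    charSum χ (A ×ˢ B) =
      charSum (χ.comp (MonoidHom.inl G G')) A * charSum (χ.comp (MonoidHom.inr G G')) B := by
  simp only [charSum_eq_sum_toFinset, Set.toFinset_prod, Finset.sum_product, Finset.sum_mul_sum]
  refine Finset.sum_congr rfl fun a _ => Finset.sum_congr rfl fun b _ => ?_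
  simp only [MonoidHom.comp_apply, MonoidHom.inl_apply, MonoidHom.inr_apply, ← Units.val_mul,
    ← map_mul, Prod.mk_mul_mk, mul_one, one_mul]

end CharacterSums

section Orthogonality

variable [CommGroup G] [Finite G]

noncomputable instance : Fintype (G →* ℂˣ) := Fintype.ofFinite _

theorem sum_chars_apply (g : G) [Decidable (g = 1)] :
    ∑ χ : G →* ℂˣ, (χ g : ℂ) = if g = 1 then (Nat.card G : ℂ) else 0 := by
  have hev : (Units.coeHom ℂ).comp (MonoidHom.eval g) = 1 ↔ g = 1 := by
    refine ⟨fun h => ?_, by rintro rfl; ext; simp⟩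
    by_contra hg
    obtain ⟨φ, hφ⟩ := CommGroup.exists_apply_ne_one_of_hasEnoughRootsOfUnity G ℂ hg
    exact hφ (Units.ext (by simpa using DFunLike.congr_fun h φ))
  classical
  rw [← CommGroup.card_monoidHom_of_hasEnoughRootsOfUnity G ℂ, Nat.card_eq_fintype_card]
  have := sum_hom_units ((Units.coeHom ℂ).comp (MonoidHom.eval g : (G →* ℂˣ) →* ℂˣ))
  simpa [hev] using this

theorem eq_of_forall_sum_mul_char_eq [Fintype G] {f₁ f₂ : G → ℂ}
    (h : ∀ χ : G →* ℂˣ, ∑ g, f₁ g * χ g = ∑ g, f₂ g * χ g) : f₁ = f₂ := by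
  classical
  funext y
  have key (f : G → ℂ) : ∑ χ : G →* ℂˣ, (χ y⁻¹ : ℂ) * ∑ g, f g * χ g = f y * Nat.card G :=
    calc ∑ χ : G →* ℂˣ, (χ y⁻¹ : ℂ) * ∑ g, f g * χ g
        = ∑ g, f g * ∑ χ : G →* ℂˣ, (χ (g * y⁻¹) : ℂ) := by
          simp_rw [Finset.mul_sum, map_mul, Units.val_mul]
          rw [Finset.sum_comm]
          exact Finset.sum_congr rfl fun _ _ => Finset.sum_congr rfl fun _ _ => by ring
      _ = ∑ g, f g * if g = y then (Nat.card G : ℂ) else 0 := by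
          simp_rw [sum_chars_apply, mul_inv_eq_one]
      _ = f y * Nat.card G := by simp
  refine mul_right_cancel₀ (Nat.cast_ne_zero.mpr (Nat.card_pos (α := G)).ne') ?_
  rw [← key, ← key]
  simp_rw [h]

end Orthogonality

section DifferenceMultiplicity

open scoped Classical

variable [CommGroup G] [Fintype G]

/-- The coefficient of `g` in `D D⁽⁻¹⁾` in the group ring; unlike `diffCount`, it also counts the
pairs `(x, x)`. -/
noncomputable def diffMultiplicity (D : Set G) (g : G) : ℕ :=
  #{p ∈ D.toFinset ×ˢ D.toFinset | p.1 * p.2⁻¹ = g}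

theorem diffCount_eq_diffMultiplicity (D : Set G) {g : G} (hg : g ≠ 1) :
    diffCount D g = diffMultiplicity D g := by
  rw [diffCount, diffMultiplicity, ← Nat.card_eq_finsetCard]
  refine Nat.card_congr (Equiv.subtypeEquivRight fun p => ?_)
  simp only [Finset.mem_filter, Finset.mem_product, Set.mem_toFinset]
  refine ⟨fun ⟨hx, hy, _, h⟩ => ⟨⟨hx, hy⟩, h⟩, fun ⟨⟨hx, hy⟩, h⟩ => ⟨hx, hy, ?_, h⟩⟩
  rintro hxy
  exact hg (by rw [← h, hxy, mul_inv_cancel])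

theorem diffMultiplicity_one (D : Set G) : diffMultiplicity D 1 = Nat.card D := by
  rw [diffMultiplicity, Nat.card_eq_card_toFinset]
  refine Finset.card_nbij' Prod.fst (fun x => (x, x)) ?_ ?_ ?_ ?_ <;> intro p <;>
    simp +contextual [mul_inv_eq_one, Prod.ext_iff]

theorem sum_diffMultiplicity_mul_char {D : Set G} (hinv : D⁻¹ = D) (χ : G →* ℂˣ) :
    ∑ g, (diffMultiplicity D g : ℂ) * χ g = charSum χ D ^ 2 := by
  have hinvSum : ∑ y ∈ D.toFinset, (χ y⁻¹ : ℂ) = charSum χ D := by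
    rw [charSum_eq_sum_toFinset]
    have hmem : ∀ y ∈ D.toFinset, y⁻¹ ∈ D.toFinset := fun y hy => by
      rwa [Set.mem_toFinset, ← Set.mem_inv, hinv, ← Set.mem_toFinset]
    exact Finset.sum_nbij' (·⁻¹) (·⁻¹) hmem hmem (by simp) (by simp) (by simp)
  calc ∑ g, (diffMultiplicity D g : ℂ) * χ g
      = ∑ g, ∑ p ∈ D.toFinset ×ˢ D.toFinset with p.1 * p.2⁻¹ = g, (χ (p.1 * p.2⁻¹) : ℂ) := by
        refine Finset.sum_congr rfl fun g _ => ?_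
        rw [diffMultiplicity, Finset.cast_card, Finset.sum_mul]
        exact Finset.sum_congr rfl fun p hp => by rw [(Finset.mem_filter.mp hp).2, one_mul]
    _ = ∑ x ∈ D.toFinset, ∑ y ∈ D.toFinset, (χ x : ℂ) * χ y⁻¹ := by
        refine (Finset.sum_fiberwise _ (fun p : G × G => p.1 * p.2⁻¹) _).trans ?_
        rw [Finset.sum_product]
        simp only [map_mul, Units.val_mul]
    _ = charSum χ D ^ 2 := by
        rw [← Finset.sum_mul_sum, hinvSum, ← charSum_eq_sum_toFinset, sq]

end DifferenceMultiplicity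

section LatinSquareType

open scoped Classical

variable [CommGroup G] [Fintype G] {D : Set G} {n r : ℕ}

/-- The coefficients of `r (n - 1) · 1 + λ D + μ (G - 1 - D)`, which is what `D D⁽⁻¹⁾` must be in
the group ring for `D` to be a regular `(n, r)` Latin square type PDS. -/
noncomputable def latinDiffModel (D : Set G) (n r : ℕ) (g : G) : ℤ :=
  if g = 1 then (r * (n - 1) : ℕ) else if g ∈ D then n + r ^ 2 - 3 * r else r ^ 2 - r

theorem isLatinPDS_iff_diffMultiplicity (hG : Nat.card G = n ^ 2)
    (hD : Nat.card D = r * (n - 1)) (h1 : (1 : G) ∉ D) (hinv : D⁻¹ = D) :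
    IsLatinPDS D n r ↔ ∀ g, (diffMultiplicity D g : ℤ) = latinDiffModel D n r g := by
  simp only [IsLatinPDS, IsRegularPDS, IsPDS, hG, hD, h1, hinv, true_and, not_false_eq_true,
    and_true]
  refine forall_congr' fun g => ?_
  rcases eq_or_ne g 1 with rfl | hg
  · rw [diffMultiplicity_one, hD]
    simp [latinDiffModel]
  · by_cases hgD : g ∈ D <;> simp [latinDiffModel, hg, hgD, diffCount_eq_diffMultiplicity D hg]

theorem sum_latinDiffModel_mul_char (hn : 1 ≤ n) (h1 : (1 : G) ∉ D) (χ : G →* ℂˣ) :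
    ∑ g, (latinDiffModel D n r g : ℂ) * χ g =
      r * (n - 1) - (r ^ 2 - r) + (n - 2 * r) * charSum χ D + (r ^ 2 - r) * ∑ g, (χ g : ℂ) := by
  have hpt (g : G) : (latinDiffModel D n r g : ℂ) =
      (r * (n - 1) - (r ^ 2 - r)) * (if g = 1 then 1 else 0) +
        (n - 2 * r) * (if g ∈ D then 1 else 0) + (r ^ 2 - r) := by
    rcases eq_or_ne g 1 with rfl | hg
    · simp [latinDiffModel, h1, Nat.cast_sub hn]
    · by_cases hgD : g ∈ D <;> simp only [latinDiffModel, hg, hgD, if_true, if_false] <;>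
        push_cast <;> ring
  simp_rw [hpt, add_mul, Finset.sum_add_distrib, mul_assoc, ← Finset.mul_sum, ite_mul, one_mul,
    zero_mul, Finset.sum_ite_eq', Finset.mem_univ, if_true, charSum_eq_sum_toFinset,
    ← Finset.sum_filter, Set.filter_mem_univ_eq_toFinset]
  simp

theorem isLatinPDS_iff_charSum (hG : Nat.card G = n ^ 2) (hD : Nat.card D = r * (n - 1))
    (h1 : (1 : G) ∉ D) (hinv : D⁻¹ = D) :
    IsLatinPDS D n r ↔
      ∀ χ : G →* ℂˣ, χ ≠ 1 → charSum χ D = -r ∨ charSum χ D = n - r := by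
  have hn : 1 ≤ n := Nat.pos_of_ne_zero fun hn => by
    simpa [hn] using (Nat.card_pos (α := G)).trans_eq hG
  rw [isLatinPDS_iff_diffMultiplicity hG hD h1 hinv]
  calc (∀ g, (diffMultiplicity D g : ℤ) = latinDiffModel D n r g)
      ↔ ∀ g, (diffMultiplicity D g : ℂ) = latinDiffModel D n r g := by
        simp only [← Int.cast_natCast (R := ℂ), Int.cast_inj]
    _ ↔ ∀ χ : G →* ℂˣ, ∑ g, (diffMultiplicity D g : ℂ) * χ g =
          ∑ g, (latinDiffModel D n r g : ℂ) * χ g :=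
        ⟨fun h χ => by simp only [h], fun h g => congrFun (eq_of_forall_sum_mul_char_eq h) g⟩
    _ ↔ ∀ χ : G →* ℂˣ, χ ≠ 1 → (charSum χ D + r) * (charSum χ D - (n - r)) = 0 := by
        refine forall_congr' fun χ => ?_
        rw [sum_diffMultiplicity_mul_char hinv, sum_latinDiffModel_mul_char hn h1]
        rcases eq_or_ne χ 1 with rfl | hχ
        · -- for `χ = 1` both sides only involve `|D| = r (n - 1)` and `|G| = n ^ 2`
          refine iff_of_true ?_ fun h => absurd rfl h
          simp only [charSum_one, hD, MonoidHom.one_apply, Units.val_one, Finset.sum_const,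
            Finset.card_univ, ← Nat.card_eq_fintype_card, hG]
          push_cast [Nat.cast_sub hn]
          ring
        · rw [sum_char_eq_zero hχ]
          exact ⟨fun h _ => by linear_combination h, fun h => by linear_combination h hχ⟩
    _ ↔ _ := by
        simp only [mul_eq_zero, add_eq_zero_iff_eq_neg, sub_eq_zero]

theorem IsLatinPDS.charSum_eq_or (hD : IsLatinPDS D n r) {χ : G →* ℂˣ} (hχ : χ ≠ 1) :
    charSum χ D = -r ∨ charSum χ D = n - r :=
  (isLatinPDS_iff_charSum hD.1.1 hD.1.2.1 hD.2.1 hD.2.2).mp hD χ hχ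

end LatinSquareType

theorem sum_eq_card_filter_mul {ι : Type*} [Fintype ι] {x : ι → ℂ} {a : ℂ}
    (hx : ∀ i, x i = 0 ∨ x i = a) : ∑ i, x i = #{i | x i = a} * a := by
  classical
  calc ∑ i, x i = ∑ i, if x i = a then a else 0 :=
        Finset.sum_congr rfl fun i _ => by
          split_ifs with hi
          exacts [hi, (hx i).resolve_right hi]
    _ = #{i | x i = a} * a := by rw [← Finset.sum_filter, Finset.sum_const, nsmul_eq_mul]

theorem sum_ite_eq_mul {ι : Type*} [Fintype ι] [DecidableEq ι] (i₀ : ι) (x y : ℂ) (f : ι → ℂ) :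
    ∑ i, (if i = i₀ then x else y) * f i = (x - y) * f i₀ + y * ∑ i, f i := by
  have hsplit (i : ι) : (if i = i₀ then x else y) = (if i = i₀ then x - y else 0) + y := by
    split_ifs <;> ring
  simp_rw [hsplit, add_mul, Finset.sum_add_distrib, ite_mul, zero_mul, Finset.sum_ite_eq',
    Finset.mem_univ, if_true, Finset.mul_sum]

namespace IsLPPacking

variable [CommGroup G] {c t : ℕ} {P : Fin t → Set G} {U : Subgroup G}

theorem disjoint_subgroup (h : IsLPPacking c t P U) (i : Fin t) : Disjoint (P i) U :=
  Set.disjoint_left.mpr fun _ hx hxU =>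
    (h.2.2.2.2 ▸ Set.mem_iUnion_of_mem i hx : _ ∈ Set.univ \ (U : Set G)).2 hxU

theorem exists_mem (h : IsLPPacking c t P U) {x : G} (hx : x ∉ U) : ∃ i, x ∈ P i :=
  Set.mem_iUnion.mp (h.2.2.2.2 ▸ ⟨trivial, hx⟩)

theorem notMem_subgroup (h : IsLPPacking c t P U) {i : Fin t} {x : G} (hx : x ∈ P i) : x ∉ U :=
  Set.disjoint_left.mp (h.disjoint_subgroup i) hx

theorem eq_of_mem (h : IsLPPacking c t P U) {i j : Fin t} {x : G} (hi : x ∈ P i) (hj : x ∈ P j) :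
    i = j := by
  by_contra hij
  exact Set.disjoint_left.mp (h.2.2.2.1 i j hij) hi hj

variable [Fintype G] {χ : G →* ℂˣ}

theorem card_subgroup_pos (h : IsLPPacking c t P U) : 0 < t * c :=
  h.2.1 ▸ Nat.card_pos

theorem charSum_eq_or (h : IsLPPacking c t P U) (hχ : χ ≠ 1) (i : Fin t) :
    charSum χ (P i) = -c ∨ charSum χ (P i) = ((t : ℂ) - 1) * c := by
  refine ((h.2.2.1 i).charSum_eq_or hχ).imp id fun hi => ?_
  rw [hi]
  push_cast
  ring

theorem sum_charSum (h : IsLPPacking c t P U) (hχ : χ ≠ 1) :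
    ∑ i, charSum χ (P i) = -charSum χ U := by
  have hsplit := charSum_union χ (Set.disjoint_sdiff_left : Disjoint (Set.univ \ (U : Set G)) U)
  rw [Set.sdiff_union_self, Set.univ_union, charSum_univ_eq_zero hχ, ← h.2.2.2.2,
    charSum_iUnion χ h.2.2.2.1] at hsplit
  linear_combination -hsplit

-- each `χ(Pᵢ) + c` is `0` or `t c`
theorem card_filter_mul (h : IsLPPacking c t P U) (hχ : χ ≠ 1) :
    (#{i | charSum χ (P i) + c = t * c} : ℂ) * (t * c) = t * c - charSum χ U := by
  rw [← sum_eq_card_filter_mul fun i => (h.charSum_eq_or hχ i).imp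
    (fun hi => by rw [hi]; ring) (fun hi => by rw [hi]; ring), Finset.sum_add_distrib,
    h.sum_charSum hχ]
  simp only [Finset.sum_const, Finset.card_univ, Fintype.card_fin, nsmul_eq_mul]
  ring

theorem charSum_eq_neg_of_isPrincipalOn (h : IsLPPacking c t P U) (hχ : χ ≠ 1)
    (hU : IsPrincipalOn χ U) (i : Fin t) : charSum χ (P i) = -c := by
  have htc : (t * c : ℂ) ≠ 0 := by exact_mod_cast h.card_subgroup_pos.ne'
  have hcard := h.card_filter_mul hχ
  rw [charSum_subgroup_of_isPrincipalOn hU, h.2.1, Nat.cast_mul, sub_self,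
    mul_eq_zero, or_iff_left htc, Nat.cast_eq_zero, Finset.card_eq_zero,
    Finset.filter_eq_empty_iff] at hcard
  refine (h.charSum_eq_or hχ i).resolve_right fun hi => hcard (Finset.mem_univ i) ?_
  rw [hi]
  ring

theorem exists_charSum_eq_ite (h : IsLPPacking c t P U) (hU : ¬ IsPrincipalOn χ U) :
    ∃ i₀, ∀ i, charSum χ (P i) = if i = i₀ then ((t : ℂ) - 1) * c else -(c : ℂ) := by
  have hχ := ne_one_of_not_isPrincipalOn hU
  have htc : (t * c : ℂ) ≠ 0 := by exact_mod_cast h.card_subgroup_pos.ne'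
  have hcard := h.card_filter_mul hχ
  rw [charSum_subgroup_of_not_isPrincipalOn hU, sub_zero, mul_eq_right₀ htc, Nat.cast_eq_one,
    Finset.card_eq_one] at hcard
  obtain ⟨i₀, hi₀⟩ := hcard
  refine ⟨i₀, fun i => ?_⟩
  have hmem : charSum χ (P i) + c = t * c ↔ i = i₀ := by
    simpa using Finset.ext_iff.mp hi₀ i
  split_ifs with hi
  · linear_combination hmem.mpr hi
  · exact (h.charSum_eq_or hχ i).resolve_right fun h' => hi (hmem.mp (by rw [h']; ring))

theorem charSum_eq_charSum_of_isPrincipalOn (h : IsLPPacking c t P U) (hU : IsPrincipalOn χ U)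
    (i j : Fin t) : charSum χ (P i) = charSum χ (P j) := by
  rcases eq_or_ne χ 1 with rfl | hχ
  · rw [charSum_one, charSum_one, (h.2.2.1 i).1.2.1, (h.2.2.1 j).1.2.1]
  · rw [h.charSum_eq_neg_of_isPrincipalOn hχ hU, h.charSum_eq_neg_of_isPrincipalOn hχ hU]

end IsLPPacking

section ProductConstruction

variable {G₁ G₂ : Type*} [CommGroup G₁] [CommGroup G₂] {c₁ c₂ t : ℕ}
  {P₁ : Fin t → Set G₁} {P₂ : Fin t → Set G₂} {U₁ : Subgroup G₁} {U₂ : Subgroup G₂}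

def productPacking (P₁ : Fin t → Set G₁) (P₂ : Fin t → Set G₂) (U₁ : Subgroup G₁)
    (U₂ : Subgroup G₂) (l : Fin t) : Set (G₁ × G₂) :=
  (P₁ l ×ˢ (U₂ : Set G₂)) ∪ ((U₁ : Set G₁) ×ˢ P₂ l) ∪ ⋃ i : Fin t, P₁ i ×ˢ P₂ (i + l)

theorem mem_productPacking {l : Fin t} {x : G₁ × G₂} :
    x ∈ productPacking P₁ P₂ U₁ U₂ l ↔
      (x.1 ∈ P₁ l ∧ x.2 ∈ U₂) ∨ (x.1 ∈ U₁ ∧ x.2 ∈ P₂ l) ∨ ∃ i, x.1 ∈ P₁ i ∧ x.2 ∈ P₂ (i + l) := by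
  simp [productPacking, or_assoc]

theorem one_notMem_productPacking (h₁ : IsLPPacking c₁ t P₁ U₁) (h₂ : IsLPPacking c₂ t P₂ U₂)
    (l : Fin t) : (1 : G₁ × G₂) ∉ productPacking P₁ P₂ U₁ U₂ l := by
  rw [mem_productPacking]
  rintro (⟨ha, -⟩ | ⟨-, hb⟩ | ⟨i, ha, -⟩)
  exacts [(h₁.2.2.1 l).2.1 ha, (h₂.2.2.1 l).2.1 hb, (h₁.2.2.1 i).2.1 ha]

theorem inv_productPacking (h₁ : IsLPPacking c₁ t P₁ U₁) (h₂ : IsLPPacking c₂ t P₂ U₂)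
    (l : Fin t) : (productPacking P₁ P₂ U₁ U₂ l)⁻¹ = productPacking P₁ P₂ U₁ U₂ l := by
  simp only [productPacking, Set.union_inv, Set.iUnion_inv, Set.inv_prod, inv_coe_set,
    (h₁.2.2.1 _).2.2, (h₂.2.2.1 _).2.2]

theorem disjoint_productPacking (h₁ : IsLPPacking c₁ t P₁ U₁) (h₂ : IsLPPacking c₂ t P₂ U₂)
    {l l' : Fin t} (hl : l ≠ l') :
    Disjoint (productPacking P₁ P₂ U₁ U₂ l) (productPacking P₁ P₂ U₁ U₂ l') := by
  refine Set.disjoint_left.mpr fun x hx hx' => hl ?_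
  rw [mem_productPacking] at hx hx'
  rcases hx with ⟨ha, hb⟩ | ⟨ha, hb⟩ | ⟨i, ha, hb⟩ <;>
    rcases hx' with ⟨ha', hb'⟩ | ⟨ha', hb'⟩ | ⟨j, ha', hb'⟩
  · exact h₁.eq_of_mem ha ha'
  · exact absurd ha' (h₁.notMem_subgroup ha)
  · exact absurd hb (h₂.notMem_subgroup hb')
  · exact absurd ha (h₁.notMem_subgroup ha')
  · exact h₂.eq_of_mem hb hb'
  · exact absurd ha (h₁.notMem_subgroup ha')
  · exact absurd hb' (h₂.notMem_subgroup hb)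
  · exact absurd ha' (h₁.notMem_subgroup ha)
  · obtain rfl := h₁.eq_of_mem ha ha'
    exact add_left_cancel (h₂.eq_of_mem hb hb')

theorem iUnion_productPacking (h₁ : IsLPPacking c₁ t P₁ U₁) (h₂ : IsLPPacking c₂ t P₂ U₂) :
    ⋃ l, productPacking P₁ P₂ U₁ U₂ l = Set.univ \ (U₁.prod U₂ : Set (G₁ × G₂)) := by
  ext ⟨a, b⟩
  simp only [Set.mem_iUnion, mem_productPacking, Set.mem_sdiff, Set.mem_univ, true_and,
    Subgroup.coe_prod, Set.mem_prod, SetLike.mem_coe, not_and_or]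
  constructor
  · rintro ⟨l, ⟨ha, -⟩ | ⟨-, hb⟩ | ⟨i, ha, -⟩⟩
    exacts [Or.inl (h₁.notMem_subgroup ha), Or.inr (h₂.notMem_subgroup hb),
      Or.inl (h₁.notMem_subgroup ha)]
  · intro hab
    by_cases ha : a ∈ U₁
    · obtain ⟨j, hj⟩ := h₂.exists_mem (hab.resolve_left (not_not.mpr ha))
      exact ⟨j, Or.inr (Or.inl ⟨ha, hj⟩)⟩
    obtain ⟨i, hi⟩ := h₁.exists_mem ha
    by_cases hb : b ∈ U₂
    · exact ⟨i, Or.inl ⟨hi, hb⟩⟩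
    obtain ⟨j, hj⟩ := h₂.exists_mem hb
    have : NeZero t := ⟨i.pos.ne'⟩
    exact ⟨j - i, Or.inr (Or.inr ⟨i, hi, by rwa [add_sub_cancel]⟩)⟩

variable [Fintype G₁] [Fintype G₂]

theorem charSum_productPacking (h₁ : IsLPPacking c₁ t P₁ U₁) (h₂ : IsLPPacking c₂ t P₂ U₂)
    (χ : G₁ × G₂ →* ℂˣ) (l : Fin t) :
    charSum χ (productPacking P₁ P₂ U₁ U₂ l) =
      charSum (χ.comp (MonoidHom.inl G₁ G₂)) (P₁ l) * charSum (χ.comp (MonoidHom.inr G₁ G₂)) U₂ +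
        charSum (χ.comp (MonoidHom.inl G₁ G₂)) U₁ * charSum (χ.comp (MonoidHom.inr G₁ G₂)) (P₂ l) +
        ∑ i, charSum (χ.comp (MonoidHom.inl G₁ G₂)) (P₁ i) *
          charSum (χ.comp (MonoidHom.inr G₁ G₂)) (P₂ (i + l)) := by
  have hUU : Disjoint (P₁ l ×ˢ (U₂ : Set G₂)) ((U₁ : Set G₁) ×ˢ P₂ l) :=
    Set.disjoint_prod.mpr (Or.inl (h₁.disjoint_subgroup l))
  have hUP : Disjoint ((P₁ l ×ˢ (U₂ : Set G₂)) ∪ ((U₁ : Set G₁) ×ˢ P₂ l))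
      (⋃ i, P₁ i ×ˢ P₂ (i + l)) :=
    Set.disjoint_union_left.mpr
      ⟨Set.disjoint_iUnion_right.mpr fun i =>
          Set.disjoint_prod.mpr (Or.inr (h₂.disjoint_subgroup _).symm),
        Set.disjoint_iUnion_right.mpr fun i =>
          Set.disjoint_prod.mpr (Or.inl (h₁.disjoint_subgroup i).symm)⟩
  have hPP : ∀ i j, i ≠ j → Disjoint (P₁ i ×ˢ P₂ (i + l)) (P₁ j ×ˢ P₂ (j + l)) :=
    fun i j hij => Set.disjoint_prod.mpr (Or.inl (h₁.2.2.2.1 i j hij))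
  rw [productPacking, charSum_union χ hUP, charSum_union χ hUU, charSum_iUnion χ hPP,
    charSum_prod, charSum_prod]
  simp_rw [charSum_prod]

theorem card_productPacking (h₁ : IsLPPacking c₁ t P₁ U₁) (h₂ : IsLPPacking c₂ t P₂ U₂)
    (l : Fin t) :
    Nat.card (productPacking P₁ P₂ U₁ U₂ l) = t * c₁ * c₂ * (t * (t * c₁ * c₂) - 1) := by
  have hK := charSum_productPacking h₁ h₂ 1 l
  simp only [MonoidHom.one_comp, charSum_one, SetLike.coe_sort_coe, h₁.2.1, h₂.2.1,
    (h₁.2.2.1 _).1.2.1,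
    (h₂.2.2.1 _).1.2.1, Finset.sum_const, Finset.card_univ, Fintype.card_fin,
    nsmul_eq_mul] at hK
  have hpos₁ := h₁.card_subgroup_pos
  have hpos₂ := h₂.card_subgroup_pos
  have hpos : 1 ≤ t * (t * c₁ * c₂) := by nlinarith
  refine Nat.cast_injective (R := ℂ) (hK.trans ?_)
  push_cast [Nat.cast_sub hpos₁, Nat.cast_sub hpos₂, Nat.cast_sub hpos]
  ring

theorem comp_inl_ne_one_or_comp_inr_ne_one {χ : G₁ × G₂ →* ℂˣ} (hχ : χ ≠ 1) :
    χ.comp (MonoidHom.inl G₁ G₂) ≠ 1 ∨ χ.comp (MonoidHom.inr G₁ G₂) ≠ 1 := by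
  by_contra! h
  refine hχ ?_
  rw [← MonoidHom.coprod_unique χ, h.1, h.2]
  ext
  simp

theorem charSum_productPacking_of_isPrincipalOn (h₁ : IsLPPacking c₁ t P₁ U₁)
    (h₂ : IsLPPacking c₂ t P₂ U₂) {χ : G₁ × G₂ →* ℂˣ} (hχ : χ ≠ 1)
    (hU₁ : IsPrincipalOn (χ.comp (MonoidHom.inl G₁ G₂)) U₁)
    (hU₂ : IsPrincipalOn (χ.comp (MonoidHom.inr G₁ G₂)) U₂) (l : Fin t) :
    charSum χ (productPacking P₁ P₂ U₁ U₂ l) = -(t * c₁ * c₂ : ℂ) := by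
  rw [charSum_productPacking h₁ h₂, charSum_subgroup_of_isPrincipalOn hU₁,
    charSum_subgroup_of_isPrincipalOn hU₂, h₁.2.1, h₂.2.1]
  simp_rw [h₁.charSum_eq_charSum_of_isPrincipalOn hU₁ _ l,
    h₂.charSum_eq_charSum_of_isPrincipalOn hU₂ _ l, Finset.sum_const, Finset.card_univ,
    Fintype.card_fin, nsmul_eq_mul]
  rcases comp_inl_ne_one_or_comp_inr_ne_one hχ with hχ₁ | hχ₂
  · rw [h₁.charSum_eq_neg_of_isPrincipalOn hχ₁ hU₁]
    push_cast
    ring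
  · rw [h₂.charSum_eq_neg_of_isPrincipalOn hχ₂ hU₂]
    push_cast
    ring

theorem charSum_productPacking_cases (h₁ : IsLPPacking c₁ t P₁ U₁)
    (h₂ : IsLPPacking c₂ t P₂ U₂) {χ : G₁ × G₂ →* ℂˣ} (hχ : χ ≠ 1) (l : Fin t) :
    charSum χ (productPacking P₁ P₂ U₁ U₂ l) = -(t * c₁ * c₂ : ℂ) ∨
      (∃ j, χ.comp (MonoidHom.inr G₁ G₂) ≠ 1 ∧ charSum χ (productPacking P₁ P₂ U₁ U₂ l) =
        t * c₁ * charSum (χ.comp (MonoidHom.inr G₁ G₂)) (P₂ j)) ∨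
      (∃ i, χ.comp (MonoidHom.inl G₁ G₂) ≠ 1 ∧ charSum χ (productPacking P₁ P₂ U₁ U₂ l) =
        t * c₂ * charSum (χ.comp (MonoidHom.inl G₁ G₂)) (P₁ i)) := by
  classical
  have : NeZero t := ⟨l.pos.ne'⟩
  have hPP := charSum_productPacking_of_isPrincipalOn h₁ h₂ hχ (l := l)
  rw [charSum_productPacking h₁ h₂] at hPP ⊢
  set χ₁ := χ.comp (MonoidHom.inl G₁ G₂)
  set χ₂ := χ.comp (MonoidHom.inr G₁ G₂)
  have hshift (f : Fin t → ℂ) : ∑ i, f (i + l) = ∑ j, f j := Equiv.sum_comp (Equiv.addRight l) f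
  by_cases hU₁ : IsPrincipalOn χ₁ U₁ <;> by_cases hU₂ : IsPrincipalOn χ₂ U₂
  · exact Or.inl (hPP hU₁ hU₂)
  · have hχ₂ := ne_one_of_not_isPrincipalOn hU₂
    refine Or.inr (Or.inl ⟨l, hχ₂, ?_⟩)
    rw [charSum_subgroup_of_isPrincipalOn hU₁, charSum_subgroup_of_not_isPrincipalOn hU₂, h₁.2.1]
    simp_rw [h₁.charSum_eq_charSum_of_isPrincipalOn hU₁ _ l]
    rw [← Finset.mul_sum, hshift fun j => charSum χ₂ (P₂ j), h₂.sum_charSum hχ₂,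
      charSum_subgroup_of_not_isPrincipalOn hU₂]
    push_cast
    ring
  · have hχ₁ := ne_one_of_not_isPrincipalOn hU₁
    refine Or.inr (Or.inr ⟨l, hχ₁, ?_⟩)
    rw [charSum_subgroup_of_not_isPrincipalOn hU₁, charSum_subgroup_of_isPrincipalOn hU₂, h₂.2.1]
    simp_rw [h₂.charSum_eq_charSum_of_isPrincipalOn hU₂ _ l]
    rw [← Finset.sum_mul, h₁.sum_charSum hχ₁, charSum_subgroup_of_not_isPrincipalOn hU₁]
    push_cast
    ring
  · -- `χ₁(P₁ i) = -c₁ + t c₁ [i = i₀]` and `∑ j, χ₂(P₂ j) = 0`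
    have hχ₂ := ne_one_of_not_isPrincipalOn hU₂
    obtain ⟨i₀, hi₀⟩ := h₁.exists_charSum_eq_ite hU₁
    refine Or.inr (Or.inl ⟨i₀ + l, hχ₂, ?_⟩)
    rw [charSum_subgroup_of_not_isPrincipalOn hU₁, charSum_subgroup_of_not_isPrincipalOn hU₂]
    simp_rw [hi₀]
    rw [sum_ite_eq_mul, hshift fun j => charSum χ₂ (P₂ j), h₂.sum_charSum hχ₂,
      charSum_subgroup_of_not_isPrincipalOn hU₂]
    ring

theorem charSum_productPacking_eq_or (h₁ : IsLPPacking c₁ t P₁ U₁)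
    (h₂ : IsLPPacking c₂ t P₂ U₂) {χ : G₁ × G₂ →* ℂˣ} (hχ : χ ≠ 1) (l : Fin t) :
    charSum χ (productPacking P₁ P₂ U₁ U₂ l) = -(t * c₁ * c₂ : ℂ) ∨
      charSum χ (productPacking P₁ P₂ U₁ U₂ l) = ((t : ℂ) - 1) * (t * c₁ * c₂) := by
  rcases charSum_productPacking_cases h₁ h₂ hχ l with hK | ⟨j, hχ₂, hK⟩ | ⟨i, hχ₁, hK⟩
  · exact Or.inl hK
  · rw [hK]
    exact (h₂.charSum_eq_or hχ₂ j).imp (fun h => by rw [h]; ring) fun h => by rw [h]; ring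
  · rw [hK]
    exact (h₁.charSum_eq_or hχ₁ i).imp (fun h => by rw [h]; ring) fun h => by rw [h]; ring

theorem IsLPPacking.prod (h₁ : IsLPPacking c₁ t P₁ U₁) (h₂ : IsLPPacking c₂ t P₂ U₂) :
    IsLPPacking (t * c₁ * c₂) t (productPacking P₁ P₂ U₁ U₂) (U₁.prod U₂) := by
  have hG : Nat.card (G₁ × G₂) = (t * (t * c₁ * c₂)) ^ 2 := by
    rw [Nat.card_prod, h₁.1, h₂.1]
    ring
  refine ⟨hG.trans (by ring), ?_, fun l => ?_, fun l l' hl => disjoint_productPacking h₁ h₂ hl,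
    iUnion_productPacking h₁ h₂⟩
  · rw [Nat.card_congr (Subgroup.prodEquiv U₁ U₂).toEquiv, Nat.card_prod, h₁.2.1, h₂.2.1]
    ring
  · refine (isLatinPDS_iff_charSum hG (card_productPacking h₁ h₂ l)
      (one_notMem_productPacking h₁ h₂ l) (inv_productPacking h₁ h₂ l)).mpr fun χ hχ => ?_
    push_cast
    exact (charSum_productPacking_eq_or h₁ h₂ hχ l).imp id fun h => h.trans (by ring)

end ProductConstruction

theorem stmt_9 {G1 G2 : Type*} [CommGroup G1] [Finite G1] [CommGroup G2] [Finite G2]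
    (c1 c2 t : ℕ) (U1 : Subgroup G1) (U2 : Subgroup G2)
    (P1 : Fin t → Set G1) (P2 : Fin t → Set G2)
    (h1 : IsLPPacking c1 t P1 U1) (h2 : IsLPPacking c2 t P2 U2) :
    IsLPPacking (t * c1 * c2) t
      (fun l : Fin t =>
        (P1 l ×ˢ (U2 : Set G2)) ∪ ((U1 : Set G1) ×ˢ P2 l) ∪
          ⋃ i : Fin t, P1 i ×ˢ P2 (i + l))
      (U1.prod U2) := by
  have := Fintype.ofFinite G1
  have := Fintype.ofFinite G2
  exact h1.prod h2
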